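/- arXiv:2109.06650 — 3 statements merged into one kernel-verified Lean document; each statement's English description precedes it below -/
import Mathlib

section
/- Let m ≥ 1 be an integer and let B, A₁, A₂ be positive real constants and α, β, γ nonnegative reals. Define h(r) = B(1+r)^α + (4√m+3)·A₁²·(1+r)^{2β} + 2A₂·(1+r)^γ and y(r) = 1/r + √(h(r)) for r > 0. Then y is differentiable on (0,∞), and for every r > 0 its derivative y′ satisfies y′(r) + y(r)² − √2·A₁·(1+r)^β·y(r) ≥ (1/2)·B·(1+r)^α + (2√m + 1/2)·A₁²·(1+r)^{2β} + A₂·(1+r)^γ. -/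
/-!
Write `X = √h(r)` and `E = √2·A₁·(1+r)^β`. Expanding,
`y' + y² − E·y = h'/(2X) + (2X − E)/r + X² − E·X`. The first two terms are nonnegative since `h`
is increasing and `E² ≤ 4h`, and AM–GM `E·X ≤ (E² + X²)/2` bounds the rest below by
`(h − E²)/2`, which is exactly the right-hand side: the constants `4√m + 3` and `2√m + 1/2` are
matched so that nothing is lost in this step.
-/

open Real

lemma exists_nonneg_hasDerivAt_mul_one_add_rpow {c p r : ℝ} (hc : 0 ≤ c) (hp : 0 ≤ p)
    (hr : 0 < 1 + r) : ∃ d, 0 ≤ d ∧ HasDerivAt (fun s => c * (1 + s) ^ p) d r := by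
  refine ⟨c * (p * (1 + r) ^ (p - 1)), by positivity, HasDerivAt.const_mul c ?_⟩
  simpa [Function.comp_def] using
    (hasDerivAt_rpow_const (Or.inl hr.ne')).comp r ((hasDerivAt_id r).const_add 1)

lemma hasDerivAt_inv_add_sqrt {h : ℝ → ℝ} {h' r : ℝ} (hh : HasDerivAt h h' r) (hr : r ≠ 0)
    (hpos : h r ≠ 0) :
    HasDerivAt (fun s => 1 / s + √(h s)) (-(r ^ 2)⁻¹ + h' / (2 * √(h r))) r := by
  simp only [one_div]
  exact (hasDerivAt_inv hr).add (hh.sqrt hpos)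

lemma half_sub_sq_le_inv_add_sqrt_riccati {r H D E : ℝ} (hr : 0 < r) (hH : 0 ≤ H)
    (hD : 0 ≤ D) (hE : E ≤ 2 * √H) :
    H / 2 - E ^ 2 / 2 ≤ -(r ^ 2)⁻¹ + D + (1 / r + √H) ^ 2 - E * (1 / r + √H) := by
  have hX : √H ^ 2 = H := sq_sqrt hH
  have expand : -(r ^ 2)⁻¹ + D + (1 / r + √H) ^ 2 - E * (1 / r + √H)
      = D + (2 * √H - E) * r⁻¹ + (√H ^ 2 - E * √H) := by
    field_simp
    ring
  have cross : 0 ≤ (2 * √H - E) * r⁻¹ := mul_nonneg (sub_nonneg.2 hE) (inv_nonneg.2 hr.le)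
  rw [expand]
  nlinarith [two_mul_le_add_sq E √H]

lemma half_sub_sq_le_deriv_inv_add_sqrt_riccati {h : ℝ → ℝ} {h' r E : ℝ} (hr : 0 < r)
    (hh : HasDerivAt h h' r) (hh' : 0 ≤ h') (hpos : 0 < h r) (hE : E ^ 2 ≤ 4 * h r) :
    h r / 2 - E ^ 2 / 2 ≤ deriv (fun s => 1 / s + √(h s)) r
      + (1 / r + √(h r)) ^ 2 - E * (1 / r + √(h r)) := by
  rw [(hasDerivAt_inv_add_sqrt hh hr.ne' hpos.ne').deriv]
  refine half_sub_sq_le_inv_add_sqrt_riccati hr hpos.le (by positivity) ?_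
  have : E / 2 ≤ √(h r) := (le_abs_self _).trans (abs_le_sqrt (by linarith))
  linarith

theorem tamed_exhaustion_scalar_riccati_supersolution_general
    (m : ℕ) (B A₁ A₂ α β γ : ℝ)
    (hB : 0 < B) (hA₂ : 0 < A₂)
    (hα : 0 ≤ α) (hβ : 0 ≤ β) (hγ : 0 ≤ γ)
    (h y : ℝ → ℝ)
    (hh : ∀ r : ℝ, h r =
      B * (1 + r) ^ α + (4 * Real.sqrt m + 3) * A₁ ^ 2 * (1 + r) ^ (2 * β)
        + 2 * A₂ * (1 + r) ^ γ)
    (hy : ∀ r : ℝ, y r = 1 / r + Real.sqrt (h r)) :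
    (∀ r ∈ Set.Ioi (0 : ℝ), DifferentiableAt ℝ y r) ∧
    (∀ r : ℝ, 0 < r →
      deriv y r + (y r) ^ 2 - Real.sqrt 2 * A₁ * (1 + r) ^ β * y r ≥
        (1 / 2) * B * (1 + r) ^ α + (2 * Real.sqrt m + 1 / 2) * A₁ ^ 2 * (1 + r) ^ (2 * β)
          + A₂ * (1 + r) ^ γ) := by
  have hy' : y = fun s => 1 / s + √(h s) := funext hy
  have hpos : ∀ r, 0 < r → 0 < h r := fun r hr => by rw [hh]; positivity
  have hderiv : ∀ r, 0 < r → ∃ d, 0 ≤ d ∧ HasDerivAt h d r := by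
    intro r hr
    have h1r : 0 < 1 + r := by linarith
    obtain ⟨d₁, hd₁, h₁⟩ := exists_nonneg_hasDerivAt_mul_one_add_rpow hB.le hα h1r
    obtain ⟨d₂, hd₂, h₂⟩ := exists_nonneg_hasDerivAt_mul_one_add_rpow
      (c := (4 * √m + 3) * A₁ ^ 2) (by positivity) (by positivity : 0 ≤ 2 * β) h1r
    obtain ⟨d₃, hd₃, h₃⟩ := exists_nonneg_hasDerivAt_mul_one_add_rpow
      (c := 2 * A₂) (by positivity) hγ h1r
    exact ⟨d₁ + d₂ + d₃, by positivity, funext hh ▸ (h₁.add h₂).add h₃⟩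
  refine ⟨fun r hr => ?_, fun r hr => ?_⟩
  · obtain ⟨d, -, hd⟩ := hderiv r hr
    exact hy' ▸ (hasDerivAt_inv_add_sqrt hd hr.ne' (hpos r hr).ne').differentiableAt
  · obtain ⟨d, hd₀, hd⟩ := hderiv r hr
    have hE : (√2 * A₁ * (1 + r) ^ β) ^ 2 = 2 * A₁ ^ 2 * (1 + r) ^ (2 * β) := by
      rw [mul_pow, mul_pow, sq_sqrt zero_le_two, ← rpow_mul_natCast (by linarith)]
      push_cast
      ring_nf
    have key := half_sub_sq_le_deriv_inv_add_sqrt_riccati hr hd hd₀ (hpos r hr)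
      (E := √2 * A₁ * (1 + r) ^ β) (by rw [hE, hh, ← sub_nonneg]; ring_nf; positivity)
    rw [← hy', ← hy r, hE, hh] at key
    linarith

/-- The comparison function `y(r) = 1/r + √(h(r))`, with
`h(r) = B(1+r)^α + (4√m+3)A₁²(1+r)^{2β} + 2A₂(1+r)^γ`, is differentiable on `(0,∞)` and
satisfies the scalar Riccati supersolution inequality
`y' + y² − √2·A₁·(1+r)^β·y ≥ (1/2)B(1+r)^α + (2√m + 1/2)A₁²(1+r)^{2β} + A₂(1+r)^γ`. -/
theorem tamed_exhaustion_scalar_riccati_supersolution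
    (m : ℕ) (hm : 1 ≤ m) (B A₁ A₂ α β γ : ℝ)
    (hB : 0 < B) (hA₁ : 0 < A₁) (hA₂ : 0 < A₂)
    (hα : 0 ≤ α) (hβ : 0 ≤ β) (hγ : 0 ≤ γ)
    (h y : ℝ → ℝ)
    (hh : ∀ r : ℝ, h r =
      B * (1 + r) ^ α + (4 * Real.sqrt m + 3) * A₁ ^ 2 * (1 + r) ^ (2 * β)
        + 2 * A₂ * (1 + r) ^ γ)
    (hy : ∀ r : ℝ, y r = 1 / r + Real.sqrt (h r)) :
    (∀ r ∈ Set.Ioi (0 : ℝ), DifferentiableAt ℝ y r) ∧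
    (∀ r : ℝ, 0 < r →
      deriv y r + (y r) ^ 2 - Real.sqrt 2 * A₁ * (1 + r) ^ β * y r ≥
        (1 / 2) * B * (1 + r) ^ α + (2 * Real.sqrt m + 1 / 2) * A₁ ^ 2 * (1 + r) ^ (2 * β)
          + A₂ * (1 + r) ^ γ) :=
  tamed_exhaustion_scalar_riccati_supersolution_general m B A₁ A₂ α β γ hB hA₂ hα hβ hγ h y hh hy
end

section
/- Let m ≥ 1 be an integer and let B, A₁, A₂ be positive real constants and α, β, γ nonnegative reals. Define h(r) = B(1+r)^α + (4√m+3)·A₁²·(1+r)^{2β} + 2A₂·(1+r)^γ and y(r) = 1/r + √(h(r)) for r > 0. Fix r > 0 and let A be a complex m×m matrix such that |u* (A + A*) u| ≤ √2·A₁·(1+r)^β for every unit vector u ∈ ℂ^m, where A* denotes the conjugate transpose. Then the Hermitian matrix y′(r)·I + y(r)²·I + y(r)·(A + A*) − ((1/2)·B·(1+r)^α + (2√m + 1/2)·A₁²·(1+r)^{2β} + A₂·(1+r)^γ)·I is positive semidefinite, where I is the m×m identity matrix and y′ is the derivative of y. -/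
/-! Write `S = √(h r)` and `K = √2·A₁·(1+r)^β`. The constant `c` subtracted in the statement
is `(S² - K²)/2`, and `y' ≥ -1/r²` because `h` is nondecreasing on `(-1, ∞)`. Hence
`y' + y² - c ≥ 2S/r + (S² + K²)/2 ≥ K/r + K·S = K·y`, using `K ≤ 2S` and `2KS ≤ S² + K²`.
The bound on unit vectors rescales to `Re (x* (A + A*) x) ≥ -K·x*x`, so
`(y' + y² - c)·I + y·(A + A*)` is positive semidefinite because `y ≥ 0` and `K·y ≤ y' + y² - c`. -/

open Matrix ComplexOrder

section

variable {n 𝕜 : Type*} [Fintype n] [RCLike 𝕜]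

theorem norm_star_dotProduct_mulVec_le_of_forall_unit {H : Matrix n n 𝕜} {K : ℝ}
    (hK : ∀ u : n → 𝕜, star u ⬝ᵥ u = 1 → ‖star u ⬝ᵥ (H *ᵥ u)‖ ≤ K) (x : n → 𝕜) :
    ‖star x ⬝ᵥ (H *ᵥ x)‖ ≤ K * ‖star x ⬝ᵥ x‖ := by
  obtain rfl | hx := eq_or_ne x 0
  · simp
  set N := ‖star x ⬝ᵥ x‖
  have hN : 0 < N := norm_pos_iff.mpr (dotProduct_star_self_eq_zero.not.mpr hx)
  have hxx : star x ⬝ᵥ x = (N : 𝕜) :=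
    (RCLike.norm_of_nonneg' (dotProduct_star_self_nonneg x)).symm
  set c : 𝕜 := (((√N)⁻¹ : ℝ) : 𝕜)
  have hcc : c * c = ((N⁻¹ : ℝ) : 𝕜) := by
    rw [← RCLike.ofReal_mul, ← mul_inv, Real.mul_self_sqrt hN.le]
  have hsc : star c = c := RCLike.conj_ofReal _
  have hu : star (c • x) ⬝ᵥ (c • x) = 1 := by
    rw [star_smul, smul_dotProduct, dotProduct_smul, hxx, hsc, smul_eq_mul, smul_eq_mul,
      ← mul_assoc, hcc, ← RCLike.ofReal_mul, inv_mul_cancel₀ hN.ne', RCLike.ofReal_one]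
  have hHu : star (c • x) ⬝ᵥ (H *ᵥ (c • x)) = c * c * (star x ⬝ᵥ (H *ᵥ x)) := by
    rw [star_smul, smul_dotProduct, mulVec_smul, dotProduct_smul, hsc, smul_eq_mul, smul_eq_mul,
      mul_assoc]
  have hunit := hK _ hu
  rw [hHu, norm_mul, hcc, RCLike.norm_of_nonneg (inv_nonneg.mpr hN.le)] at hunit
  rwa [inv_mul_le_iff₀ hN, mul_comm] at hunit

theorem posSemidef_smul_one_add_smul_of_forall_unit [DecidableEq n] {H : Matrix n n 𝕜}
    (hH : H.IsHermitian) {s t K : ℝ} (ht : 0 ≤ t) (hst : t * K ≤ s)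
    (hK : ∀ u : n → 𝕜, star u ⬝ᵥ u = 1 → ‖star u ⬝ᵥ (H *ᵥ u)‖ ≤ K) :
    ((s : 𝕜) • (1 : Matrix n n 𝕜) + (t : 𝕜) • H).PosSemidef := by
  refine .of_dotProduct_mulVec_nonneg ?_ fun x => ?_
  · simp [IsHermitian, conjTranspose_smul, hH.eq]
  obtain ⟨hxx_re, hxx_im⟩ := RCLike.nonneg_iff.mp (dotProduct_star_self_nonneg x)
  have hnorm : ‖star x ⬝ᵥ x‖ = RCLike.re (star x ⬝ᵥ x) := by
    rw [← RCLike.ofReal_re (K := 𝕜) ‖_‖,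
      RCLike.norm_of_nonneg' (dotProduct_star_self_nonneg x)]
  have hq := neg_le_of_abs_le ((RCLike.abs_re_le_norm (star x ⬝ᵥ (H *ᵥ x))).trans
    (norm_star_dotProduct_mulVec_le_of_forall_unit hK x))
  rw [add_mulVec, smul_mulVec, smul_mulVec, one_mulVec, dotProduct_add, dotProduct_smul,
    dotProduct_smul, smul_eq_mul, smul_eq_mul, RCLike.nonneg_iff]
  simp only [map_add, RCLike.re_ofReal_mul, RCLike.im_ofReal_mul, hxx_im,
    hH.im_star_dotProduct_mulVec_self, mul_zero, add_zero, and_true]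
  rw [hnorm] at hq
  linarith [mul_le_mul_of_nonneg_left hq ht, mul_le_mul_of_nonneg_right hst hxx_re]

end

theorem hasDerivAt_one_add_rpow (p : ℝ) {r : ℝ} (hr : 1 + r ≠ 0) :
    HasDerivAt (fun x => (1 + x) ^ p) (p * (1 + r) ^ (p - 1)) r := by
  simpa using ((hasDerivAt_id r).const_add 1).rpow_const (p := p) (Or.inl hr)

theorem neg_inv_sq_le_deriv_inv_add_sqrt {f : ℝ → ℝ} {f' r : ℝ} (hr : r ≠ 0)
    (hf : HasDerivAt f f' r) (hf' : 0 ≤ f') (hfr : f r ≠ 0) :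
    -(r ^ 2)⁻¹ ≤ deriv (fun x => 1 / x + √(f x)) r := by
  simp only [one_div]
  rw [((hasDerivAt_inv hr).fun_add (hf.sqrt hfr)).deriv]
  have : 0 ≤ f' / (2 * √(f r)) := by positivity
  linarith

theorem mul_le_riccati_of_le_two_mul {r S K y y' : ℝ} (hr : 0 ≤ r) (hK : K ≤ 2 * S)
    (hy : y = 1 / r + S) (hy' : -(r ^ 2)⁻¹ ≤ y') :
    K * y ≤ y' + y ^ 2 - (S ^ 2 - K ^ 2) / 2 := by
  have hr' : 0 ≤ r⁻¹ := inv_nonneg.mpr hr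
  have hKS : K * S ≤ (S ^ 2 + K ^ 2) / 2 := by nlinarith [sq_nonneg (S - K)]
  have hKr : K * r⁻¹ ≤ 2 * S * r⁻¹ := mul_le_mul_of_nonneg_right hK hr'
  rw [← inv_pow] at hy'
  rw [one_div] at hy
  subst hy
  nlinarith

theorem riccati_scalar_supersolution {m : ℕ} {B A₁ A₂ α β γ : ℝ}
    (hB : 0 < B) (hA₂ : 0 < A₂) (hα : 0 ≤ α) (hβ : 0 ≤ β) (hγ : 0 ≤ γ) {h y : ℝ → ℝ}
    (hh : ∀ r : ℝ, h r =
      B * (1 + r) ^ α + (4 * √m + 3) * A₁ ^ 2 * (1 + r) ^ (2 * β) + 2 * A₂ * (1 + r) ^ γ)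
    (hy : ∀ r : ℝ, y r = 1 / r + √(h r)) {r : ℝ} (hr : 0 < r) :
    √2 * A₁ * (1 + r) ^ β * y r ≤ deriv y r + y r ^ 2
      - ((1 / 2) * B * (1 + r) ^ α + (2 * √m + 1 / 2) * A₁ ^ 2 * (1 + r) ^ (2 * β)
        + A₂ * (1 + r) ^ γ) := by
  have h1r : 0 < 1 + r := by linarith
  have hderiv : HasDerivAt h (B * (α * (1 + r) ^ (α - 1))
      + (4 * √m + 3) * A₁ ^ 2 * (2 * β * (1 + r) ^ (2 * β - 1))
      + 2 * A₂ * (γ * (1 + r) ^ (γ - 1))) r := by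
    rw [funext hh]
    exact (((hasDerivAt_one_add_rpow α h1r.ne').const_mul B).add
      ((hasDerivAt_one_add_rpow (2 * β) h1r.ne').const_mul _)).add
      ((hasDerivAt_one_add_rpow γ h1r.ne').const_mul _)
  have hpos : 0 < h r := by rw [hh]; positivity
  have hy' : -(r ^ 2)⁻¹ ≤ deriv y r := by
    rw [funext hy]
    exact neg_inv_sq_le_deriv_inv_add_sqrt hr.ne' hderiv (by positivity) hpos.ne'
  have hsq : (1 + r) ^ (2 * β) = ((1 + r) ^ β) ^ 2 := by
    rw [mul_comm]; exact_mod_cast Real.rpow_mul_natCast h1r.le β 2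
  have hS : √(h r) ^ 2 = h r := Real.sq_sqrt hpos.le
  have hK : (√2 * A₁ * (1 + r) ^ β) ^ 2 = 2 * A₁ ^ 2 * (1 + r) ^ (2 * β) := by
    rw [hsq, mul_pow, mul_pow, Real.sq_sqrt zero_le_two]
  have hK₂ : √2 * A₁ * (1 + r) ^ β ≤ 2 * √(h r) := by
    refine abs_le_of_sq_le_sq' ?_ (by positivity) |>.2
    rw [hK, mul_pow, hS, hh]
    have hBA₂ : 0 ≤ B * (1 + r) ^ α + 2 * A₂ * (1 + r) ^ γ := by positivity
    nlinarith [Real.sqrt_nonneg m, sq_nonneg A₁, Real.rpow_nonneg h1r.le (2 * β)]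
  convert mul_le_riccati_of_le_two_mul hr.le hK₂ (hy r) hy' using 2
  rw [hK, hS, hh]
  ring

theorem tamed_exhaustion_matrix_riccati_supersolution_general
    (m : ℕ) (B A₁ A₂ α β γ : ℝ)
    (hB : 0 < B) (hA₂ : 0 < A₂)
    (hα : 0 ≤ α) (hβ : 0 ≤ β) (hγ : 0 ≤ γ)
    (h y : ℝ → ℝ)
    (hh : ∀ r : ℝ, h r =
      B * (1 + r) ^ α + (4 * Real.sqrt m + 3) * A₁ ^ 2 * (1 + r) ^ (2 * β)
        + 2 * A₂ * (1 + r) ^ γ)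
    (hy : ∀ r : ℝ, y r = 1 / r + Real.sqrt (h r))
    (r : ℝ) (hr : 0 < r)
    (A : Matrix (Fin m) (Fin m) ℂ)
    (hA : ∀ u : Fin m → ℂ, star u ⬝ᵥ u = 1 →
      ‖star u ⬝ᵥ ((A + Aᴴ) *ᵥ u)‖ ≤ Real.sqrt 2 * A₁ * (1 + r) ^ β) :
    Matrix.PosSemidef
      (((deriv y r : ℝ) : ℂ) • (1 : Matrix (Fin m) (Fin m) ℂ)
        + (((y r) ^ 2 : ℝ) : ℂ) • (1 : Matrix (Fin m) (Fin m) ℂ)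
        + ((y r : ℝ) : ℂ) • (A + Aᴴ)
        - (((1 / 2) * B * (1 + r) ^ α + (2 * Real.sqrt m + 1 / 2) * A₁ ^ 2 * (1 + r) ^ (2 * β)
            + A₂ * (1 + r) ^ γ : ℝ) : ℂ) • (1 : Matrix (Fin m) (Fin m) ℂ)) := by
  have hy₀ : 0 ≤ y r := by rw [hy]; positivity
  have hscalar := riccati_scalar_supersolution (m := m) hB hA₂ hα hβ hγ hh hy hr
  -- the ascription makes `hpsd` use `ℂ`'s own instances rather than those of `RCLike ℂ`,
  -- so that `module` can compare the two matrices
  have hpsd : Matrix.PosSemidef (_ : Matrix (Fin m) (Fin m) ℂ) :=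
    posSemidef_smul_one_add_smul_of_forall_unit (isHermitian_add_transpose_self A) hy₀
      ((mul_comm _ _).trans_le hscalar) hA
  convert hpsd using 1
  push_cast
  module

/-- the matrix supersolution inequality: for `y(r) = 1/r + √(h(r))` and any
complex `m×m` matrix `A` with `|u*(A+A*)u| ≤ √2·A₁·(1+r)^β` for all unit vectors `u`, the
Hermitian matrix
`y'(r)·I + y(r)²·I + y(r)·(A+A*) − ((1/2)B(1+r)^α + (2√m+1/2)A₁²(1+r)^{2β} + A₂(1+r)^γ)·I`
is positive semidefinite. -/
theorem tamed_exhaustion_matrix_riccati_supersolution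
    (m : ℕ) (hm : 1 ≤ m) (B A₁ A₂ α β γ : ℝ)
    (hB : 0 < B) (hA₁ : 0 < A₁) (hA₂ : 0 < A₂)
    (hα : 0 ≤ α) (hβ : 0 ≤ β) (hγ : 0 ≤ γ)
    (h y : ℝ → ℝ)
    (hh : ∀ r : ℝ, h r =
      B * (1 + r) ^ α + (4 * Real.sqrt m + 3) * A₁ ^ 2 * (1 + r) ^ (2 * β)
        + 2 * A₂ * (1 + r) ^ γ)
    (hy : ∀ r : ℝ, y r = 1 / r + Real.sqrt (h r))
    (r : ℝ) (hr : 0 < r)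
    (A : Matrix (Fin m) (Fin m) ℂ)
    (hA : ∀ u : Fin m → ℂ, star u ⬝ᵥ u = 1 →
      ‖star u ⬝ᵥ ((A + Aᴴ) *ᵥ u)‖ ≤ Real.sqrt 2 * A₁ * (1 + r) ^ β) :
    Matrix.PosSemidef
      (((deriv y r : ℝ) : ℂ) • (1 : Matrix (Fin m) (Fin m) ℂ)
        + (((y r) ^ 2 : ℝ) : ℂ) • (1 : Matrix (Fin m) (Fin m) ℂ)
        + ((y r : ℝ) : ℂ) • (A + Aᴴ)
        - (((1 / 2) * B * (1 + r) ^ α + (2 * Real.sqrt m + 1 / 2) * A₁ ^ 2 * (1 + r) ^ (2 * β)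
            + A₂ * (1 + r) ^ γ : ℝ) : ℂ) • (1 : Matrix (Fin m) (Fin m) ℂ)) :=
  tamed_exhaustion_matrix_riccati_supersolution_general m B A₁ A₂ α β γ hB hA₂ hα hβ hγ h y hh hy r
    hr A hA
end

section
/- Let n ≥ 1, let v, λ : ℝⁿ → ℝ (with ℝⁿ carrying the Euclidean inner product) be twice continuously differentiable on a neighborhood of a point p, and let ε > 0 be a real number with 1 − ε·v(p) > 0. Define φ(x) = (1 − ε·v(x))²·λ(x). If φ has a local maximum at p, then (1 − ε·v(p))²·Δλ(p) ≤ 6·ε²·λ(p)·‖∇v(p)‖² + 2·ε·(1 − ε·v(p))·λ(p)·Δv(p), where Δ denotes the Euclidean Laplacian (the trace of the Hessian) and ∇v(p) the gradient of v at p. -/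
/-!
Restricting to a line `t ↦ p + t • e` reduces everything to one variable, where a local
maximum of `φ = w² λ`, `w = 1 - ε v`, forces `φ' = 0` and `φ'' ≤ 0`. Since `w ≠ 0`, the
first condition reads `w λ' = 2 ε v' λ`; substituting it into
`φ'' = 2 (w'² + w w'') λ + 4 w w' λ' + w² λ''` with `w' = -ε v'`, `w'' = -ε v''` gives the
inequality in the direction `e`. Summing over an orthonormal basis turns the pure second
derivatives into Laplacians and `∑ (∂ᵢ v)²` into `‖∇v‖²`.
-/

/-- The Euclidean Laplacian of `f : ℝⁿ → ℝ` at `p`: the trace of the second derivative,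
i.e. the sum of the pure second directional derivatives along an orthonormal basis. -/
noncomputable def euclideanLaplacian {n : ℕ} (f : EuclideanSpace ℝ (Fin n) → ℝ)
    (p : EuclideanSpace ℝ (Fin n)) : ℝ :=
  ∑ i : Fin n,
    fderiv ℝ (fderiv ℝ f) p (EuclideanSpace.basisFun (Fin n) ℝ i)
      (EuclideanSpace.basisFun (Fin n) ℝ i)

open Filter Topology

section OneVariable

variable {f g a b : ℝ → ℝ} {t ε : ℝ}

theorem IsLocalMax.deriv_deriv_nonpos (hmax : IsLocalMax f t) (hc : ContinuousAt f t) :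
    deriv (deriv f) t ≤ 0 := by
  by_contra! hpos
  -- `f'' > 0` would make `t` also a local minimum, so `f` is constant near `t` and `f'' = 0`.
  have hconst : f =ᶠ[𝓝 t] fun _ => f t :=
    ((isLocalMin_of_deriv_deriv_pos hpos hmax.deriv_eq_zero hc).and hmax).mono
      fun _ hs => le_antisymm hs.2 hs.1
  have hderiv : deriv f =ᶠ[𝓝 t] fun _ => 0 :=
    hconst.eventuallyEq_nhds.mono fun _ hs => by rw [hs.deriv_eq, deriv_const]
  simp [hderiv.deriv_eq] at hpos

theorem ContDiffAt.eventually_hasDerivAt (hf : ContDiffAt ℝ 2 f t) :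
    ∀ᶠ s in 𝓝 t, HasDerivAt f (deriv f s) s :=
  (hf.eventually (by simp)).mono fun _ hs => (hs.differentiableAt two_ne_zero).hasDerivAt

theorem ContDiffAt.hasDerivAt_deriv (hf : ContDiffAt ℝ 2 f t) :
    HasDerivAt (deriv f) (deriv (deriv f) t) t :=
  ((hf.derivWithin (m := 1) (by norm_num)).differentiableAt one_ne_zero).hasDerivAt

theorem ContDiffAt.deriv_deriv_mul (hf : ContDiffAt ℝ 2 f t) (hg : ContDiffAt ℝ 2 g t) :
    deriv (deriv fun s => f s * g s) t =
      deriv (deriv f) t * g t + 2 * (deriv f t * deriv g t) + f t * deriv (deriv g) t := by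
  have hd : deriv (fun s => f s * g s) =ᶠ[𝓝 t] fun s => deriv f s * g s + f s * deriv g s :=
    (hf.eventually_hasDerivAt.and hg.eventually_hasDerivAt).mono fun _ hs =>
      (hs.1.mul hs.2).deriv
  rw [hd.deriv_eq,
    ((hf.hasDerivAt_deriv.fun_mul (hg.differentiableAt two_ne_zero).hasDerivAt).fun_add
      ((hf.differentiableAt two_ne_zero).hasDerivAt.fun_mul hg.hasDerivAt_deriv)).deriv]
  ring

theorem sq_mul_deriv_deriv_le_of_isLocalMax (ha : ContDiffAt ℝ 2 a t) (hb : ContDiffAt ℝ 2 b t)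
    (hw : 1 - ε * a t ≠ 0) (hmax : IsLocalMax (fun s => (1 - ε * a s) ^ 2 * b s) t) :
    (1 - ε * a t) ^ 2 * deriv (deriv b) t ≤
      6 * ε ^ 2 * b t * deriv a t ^ 2 + 2 * ε * (1 - ε * a t) * b t * deriv (deriv a) t := by
  have hwC : ContDiffAt ℝ 2 (fun s => 1 - ε * a s) t :=
    contDiffAt_const.sub (contDiffAt_const.mul ha)
  have hwd : DifferentiableAt ℝ (fun s => 1 - ε * a s) t := hwC.differentiableAt two_ne_zero
  have hw' : deriv (fun s => 1 - ε * a s) = fun s => -ε * deriv a s := by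
    ext s
    rw [deriv_const_sub, deriv_const_mul_field', neg_mul]
  have hw'' : deriv (deriv fun s => 1 - ε * a s) t = -ε * deriv (deriv a) t := by
    rw [hw', deriv_const_mul_field']
  simp only [sq] at hmax ⊢
  have hfirst := hmax.deriv_eq_zero
  have hsecond := hmax.deriv_deriv_nonpos ((hwC.mul hwC).mul hb).continuousAt
  rw [deriv_fun_mul (hwd.fun_mul hwd) (hb.differentiableAt two_ne_zero), deriv_fun_mul hwd hwd]
    at hfirst
  rw [(hwC.mul hwC).deriv_deriv_mul hb, hwC.deriv_deriv_mul hwC, hw'', deriv_fun_mul hwd hwd]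
    at hsecond
  simp only [hw'] at hfirst hsecond
  have hcrit : (1 - ε * a t) * deriv b t = 2 * ε * deriv a t * b t :=
    mul_left_cancel₀ hw (by linear_combination hfirst)
  linear_combination hsecond + 4 * ε * deriv a t * hcrit

end OneVariable

section Line

variable {E F : Type*} [NormedAddCommGroup E] [NormedSpace ℝ E] [NormedAddCommGroup F]
  [NormedSpace ℝ F] {f : E → F} {p e : E}

theorem hasDerivAt_comp_line {s : ℝ} (hf : DifferentiableAt ℝ f (p + s • e)) :
    HasDerivAt (fun t : ℝ => f (p + t • e)) (fderiv ℝ f (p + s • e) e) s :=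
  hf.hasFDerivAt.comp_hasDerivAt s <| by
    simpa using ((hasDerivAt_id s).smul_const e).const_add p

theorem ContDiffAt.comp_line {n : WithTop ℕ∞} (hf : ContDiffAt ℝ n f p) :
    ContDiffAt ℝ n (fun t : ℝ => f (p + t • e)) 0 :=
  (by simpa using hf : ContDiffAt ℝ n f (p + (0 : ℝ) • e)).comp 0 (by fun_prop)

theorem deriv_comp_line (hf : DifferentiableAt ℝ f p) :
    deriv (fun t : ℝ => f (p + t • e)) 0 = fderiv ℝ f p e :=
  hf.lineDeriv_eq_fderiv

theorem deriv_deriv_comp_line (hf : ContDiffAt ℝ 2 f p) :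
    deriv (deriv fun t : ℝ => f (p + t • e)) 0 = fderiv ℝ (fderiv ℝ f) p e e := by
  have hline : Tendsto (fun t : ℝ => p + t • e) (𝓝 0) (𝓝 p) := by
    simpa using (show Continuous fun t : ℝ => p + t • e by fun_prop).tendsto 0
  have hd : deriv (fun t : ℝ => f (p + t • e)) =ᶠ[𝓝 0] fun t => fderiv ℝ f (p + t • e) e :=
    (hline.eventually (hf.eventually (by simp))).mono fun t ht =>
      (hasDerivAt_comp_line (ht.differentiableAt two_ne_zero)).deriv
  have hF : DifferentiableAt ℝ (fderiv ℝ f) (p + (0 : ℝ) • e) := by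
    simpa using (hf.fderiv_right (m := 1) le_rfl).differentiableAt one_ne_zero
  rw [hd.deriv_eq, ((hasDerivAt_comp_line hF).clm_apply (hasDerivAt_const 0 e)).deriv]
  simp

end Line

theorem sq_mul_fderiv_fderiv_le_of_isLocalMax {E : Type*} [NormedAddCommGroup E]
    [NormedSpace ℝ E] {v l : E → ℝ} {p : E} {ε : ℝ} (hv : ContDiffAt ℝ 2 v p)
    (hl : ContDiffAt ℝ 2 l p) (hw : 1 - ε * v p ≠ 0)
    (hmax : IsLocalMax (fun x => (1 - ε * v x) ^ 2 * l x) p) (e : E) :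
    (1 - ε * v p) ^ 2 * fderiv ℝ (fderiv ℝ l) p e e ≤
      6 * ε ^ 2 * l p * fderiv ℝ v p e ^ 2
        + 2 * ε * (1 - ε * v p) * l p * fderiv ℝ (fderiv ℝ v) p e e := by
  have hmax_line : IsLocalMax (fun t : ℝ => (1 - ε * v (p + t • e)) ^ 2 * l (p + t • e)) 0 :=
    IsLocalMax.comp_continuous (f := fun x => (1 - ε * v x) ^ 2 * l x)
      (g := fun t : ℝ => p + t • e) (b := 0) (by simpa using hmax) (by fun_prop)
  simpa [deriv_comp_line (hv.differentiableAt two_ne_zero), deriv_deriv_comp_line hv,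
    deriv_deriv_comp_line hl] using
    sq_mul_deriv_deriv_le_of_isLocalMax hv.comp_line hl.comp_line (by simpa using hw) hmax_line

theorem laplacian_ineq_at_local_max_of_weighted_product_general
    (n : ℕ) (v l : EuclideanSpace ℝ (Fin n) → ℝ)
    (p : EuclideanSpace ℝ (Fin n))
    (hv : ContDiffAt ℝ 2 v p) (hl : ContDiffAt ℝ 2 l p)
    (ε : ℝ) (hεv : 0 < 1 - ε * v p)
    (hmax : IsLocalMax (fun x => (1 - ε * v x) ^ 2 * l x) p) :
    (1 - ε * v p) ^ 2 * euclideanLaplacian l p ≤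
      6 * ε ^ 2 * l p * ‖gradient v p‖ ^ 2
        + 2 * ε * (1 - ε * v p) * l p * euclideanLaplacian v p := by
  set b := EuclideanSpace.basisFun (Fin n) ℝ
  have hgrad : ‖gradient v p‖ ^ 2 = ∑ i, fderiv ℝ v p (b i) ^ 2 := by
    rw [← b.norm_dual]
    exact congrArg (· ^ 2) ((InnerProductSpace.toDual ℝ _).symm.norm_map _)
  rw [hgrad, euclideanLaplacian, euclideanLaplacian, Finset.mul_sum, Finset.mul_sum,
    Finset.mul_sum, ← Finset.sum_add_distrib]
  exact Finset.sum_le_sum fun i _ =>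
    sq_mul_fderiv_fderiv_le_of_isLocalMax hv hl hεv.ne' hmax (b i)

/-- second-order maximum-principle estimate: if `φ = (1 − εv)²·λ` (with `v`, `λ`
twice continuously differentiable near `p`, `ε > 0`, `1 − εv(p) > 0`) has a local maximum at
`p`, then `(1 − εv(p))²·Δλ(p) ≤ 6ε²λ(p)‖∇v(p)‖² + 2ε(1 − εv(p))λ(p)·Δv(p)`. -/
theorem laplacian_ineq_at_local_max_of_weighted_product
    (n : ℕ) (hn : 1 ≤ n) (v l : EuclideanSpace ℝ (Fin n) → ℝ)
    (p : EuclideanSpace ℝ (Fin n))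
    (hv : ContDiffAt ℝ 2 v p) (hl : ContDiffAt ℝ 2 l p)
    (ε : ℝ) (hε : 0 < ε) (hεv : 0 < 1 - ε * v p)
    (hmax : IsLocalMax (fun x => (1 - ε * v x) ^ 2 * l x) p) :
    (1 - ε * v p) ^ 2 * euclideanLaplacian l p ≤
      6 * ε ^ 2 * l p * ‖gradient v p‖ ^ 2
        + 2 * ε * (1 - ε * v p) * l p * euclideanLaplacian v p :=
  laplacian_ineq_at_local_max_of_weighted_product_general n v l p hv hl ε hεv hmax
end
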